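/- Let A, C ∈ ℝ^{n×n}, r ≥ ε ≥ 0, let Θ, λ > 0 satisfy |exp(At)| ≤ Θ e^{−λt} for all t ≥ 0, let σ ∈ (0, λ), let d, q : [0,∞) → [−1,1] be measurable, let x be a solution of system (2.12), and define v(t) := x(t−r) − x(t−r−εd(t)) for t ≥ 0. Then for all t ≥ r + ε: sup_{r+ε ≤ s ≤ t} (e^{σs}|v(s)|) ≤ e^{σ(r+ε)} (e^{|A|ε} − 1) · max_{0 ≤ s ≤ t−r} (e^{σs}|x(s)|) + Θ e^{σ(r+ε)} ((1 − e^{−(λ−σ)ε})/(λ−σ)) |C| · sup_{0 ≤ s ≤ t−r+ε} (e^{σs}|v(s)|). -/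

import Mathlib

open MeasureTheory

/-- Matrix-vector multiplication between Euclidean spaces. -/
noncomputable def mv {n m : ℕ} (A : Matrix (Fin n) (Fin m) ℝ)
    (x : EuclideanSpace ℝ (Fin m)) : EuclideanSpace ℝ (Fin n) :=
  Matrix.toEuclideanLin A x

/-- Operator norm of a matrix induced by the Euclidean vector norms. -/
noncomputable def opNorm {n m : ℕ} (A : Matrix (Fin n) (Fin m) ℝ) : ℝ :=
  ‖LinearMap.toContinuousLinearMap (Matrix.toEuclideanLin A)‖

/-- `mexp A t = exp (t A)`, the matrix exponential. -/
noncomputable def mexp {n : ℕ} (A : Matrix (Fin n) (Fin n) ℝ) (t : ℝ) :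
    Matrix (Fin n) (Fin n) ℝ :=
  NormedSpace.exp (t • A)

/-!
For `s ≥ r + ε`, `v s` is, up to sign, the increment of `x` between the delayed times `c ≤ m`
(`s - r` and `s - r - ε d(s)` in some order), which lie at most `ε` apart. Between them `x`
solves `x' = A x + f` with `f(u) = -q(u) C v(u)`, so the variation-of-constants formula
`x(m) = e^{(m-c)A} x(c) + ∫_c^m e^{(m-u)A} f(u) du` bounds `|v s|` by `(e^{|A|ε} - 1) |x(c)|` plus
`Θ |C| ∫_c^m e^{-λ(m-u)} |v(u)| du`; multiplying by `e^{σs}` and bounding `e^{σu}|x(u)|`,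
`e^{σu}|v(u)|` by their suprema gives the estimate.

Since `x` is only absolutely continuous, the variation-of-constants formula is proved by showing
that `u ↦ e^{(m-u)A} x(u) - ∫_c^u e^{(m-τ)A} f(τ) dτ` is Lipschitz with derivative zero almost
everywhere.
-/

open Set
open scoped NNReal

theorem norm_exp_sub_one_le {𝔸 : Type*} [NormedRing 𝔸] [NormedAlgebra ℝ 𝔸] [CompleteSpace 𝔸]
    (a : 𝔸) : ‖NormedSpace.exp a - 1‖ ≤ Real.exp ‖a‖ - 1 := by
  have ha := (hasSum_nat_add_iff' 1).2 (NormedSpace.exp_series_hasSum_exp' (𝕂 := ℝ) a)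
  have hr := (hasSum_nat_add_iff' 1).2 (NormedSpace.expSeries_div_hasSum_exp ‖a‖)
  simp only [Finset.range_one, Finset.sum_singleton, pow_zero, Nat.factorial_zero,
    Nat.cast_one, inv_one, one_smul, div_one, ← Real.exp_eq_exp_ℝ] at ha hr
  refine ha.norm_le_of_bounded hr fun k => ?_
  rw [norm_smul, Real.norm_of_nonneg (by positivity), div_eq_inv_mul]
  gcongr
  exact norm_pow_le' a k.succ_pos

theorem integral_exp_neg_mul_sub {μ : ℝ} (hμ : μ ≠ 0) (c m : ℝ) :
    ∫ u in c..m, Real.exp (-μ * (m - u)) = (1 - Real.exp (-μ * (m - c))) / μ := by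
  have hderiv : ∀ u ∈ uIcc c m,
      HasDerivAt (fun u => Real.exp (-μ * (m - u)) / μ) (Real.exp (-μ * (m - u))) u := by
    intro u _
    refine ((((hasDerivAt_id' u).const_sub m).const_mul (-μ)).exp.div_const μ).congr_deriv ?_
    field_simp
  rw [intervalIntegral.integral_eq_sub_of_hasDerivAt hderiv
    (Continuous.intervalIntegrable (by fun_prop) _ _)]
  simp [sub_div]

theorem bddAbove_exp_mul_norm_image {E : Type*} [SeminormedAddGroup E] {f : ℝ → E}
    {a b B : ℝ} (σ : ℝ) (hB : ∀ u ∈ Icc a b, ‖f u‖ ≤ B) :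
    BddAbove ((fun s => Real.exp (σ * s) * ‖f s‖) '' Icc a b) := by
  obtain ⟨M, hM⟩ := (isCompact_Icc (a := a) (b := b)).bddAbove_image
    (f := fun s => Real.exp (σ * s)) (by fun_prop : Continuous _).continuousOn
  refine ⟨M * B, ?_⟩
  rintro _ ⟨u, hu, rfl⟩
  have hMu := hM ⟨u, hu, rfl⟩
  exact mul_le_mul hMu (hB u hu) (norm_nonneg _) ((Real.exp_pos _).le.trans hMu)

section VariationOfConstants

variable {E F : Type*} [NormedAddCommGroup E] [NormedSpace ℝ E] [NormedAddCommGroup F]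
  [NormedSpace ℝ F]

theorem exists_lipschitzOnWith_clm_apply {α : Type*} [PseudoMetricSpace α] {s : Set α}
    {P : α → E →L[ℝ] F} {y : α → E} {Kp Ky : ℝ≥0} (hs : IsCompact s)
    (hP : LipschitzOnWith Kp P s) (hy : LipschitzOnWith Ky y s) :
    ∃ K, LipschitzOnWith K (fun u => P u (y u)) s := by
  obtain ⟨Bp, hBp⟩ := hs.exists_bound_of_continuousOn hP.continuousOn
  obtain ⟨By, hBy⟩ := hs.exists_bound_of_continuousOn hy.continuousOn
  refine ⟨_, LipschitzOnWith.of_dist_le' (K := Bp * Ky + Kp * By) fun u hu u' hu' => ?_⟩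
  have hBp0 : 0 ≤ Bp := (norm_nonneg _).trans (hBp u hu)
  calc dist (P u (y u)) (P u' (y u'))
      = ‖P u (y u - y u') + (P u - P u') (y u')‖ := by
        rw [dist_eq_norm, map_sub, sub_apply, sub_add_sub_cancel]
    _ ≤ ‖P u‖ * ‖y u - y u'‖ + ‖P u - P u'‖ * ‖y u'‖ :=
        (norm_add_le _ _).trans (add_le_add ((P u).le_opNorm _) ((P u - P u').le_opNorm _))
    _ ≤ Bp * (Ky * dist u u') + Kp * dist u u' * By := by
        rw [← dist_eq_norm, ← dist_eq_norm]
        gcongr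
        exacts [hBp u hu, hy.dist_le_mul u hu u' hu', hP.dist_le_mul u hu u' hu', hBy u' hu']
    _ = (Bp * Ky + Kp * By) * dist u u' := by ring

theorem lipschitzOnWith_intervalIntegral {g : ℝ → E} {a b K : ℝ}
    (hg : IntervalIntegrable g volume a b) (hK : ∀ u ∈ uIcc a b, ‖g u‖ ≤ K) :
    LipschitzOnWith K.toNNReal (fun u => ∫ τ in a..u, g τ) (uIcc a b) := by
  refine LipschitzOnWith.of_dist_le' fun u hu u' hu' => ?_
  have hsub : ∀ {v}, v ∈ uIcc a b → uIcc a v ⊆ uIcc a b := fun hv =>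
    uIcc_subset_uIcc left_mem_uIcc hv
  rw [dist_eq_norm, intervalIntegral.integral_interval_sub_left (hg.mono_set (hsub hu))
    (hg.mono_set (hsub hu')), Real.dist_eq]
  exact intervalIntegral.norm_integral_le_of_norm_le_const fun τ hτ =>
    hK τ (uIcc_subset_uIcc hu' hu (uIoc_subset_uIcc hτ))

theorem IntervalIntegrable.continuousOn_clm_apply {P : ℝ → E →L[ℝ] F} {w : ℝ → E} {a b : ℝ}
    (hw : IntervalIntegrable w volume a b) (hP : ContinuousOn P (uIcc a b)) :
    IntervalIntegrable (fun u => P u (w u)) volume a b := by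
  obtain ⟨B, hB⟩ := isCompact_uIcc.exists_bound_of_continuousOn hP
  refine (hw.norm.const_mul B).mono_fun' ?_ ?_
  · exact isBoundedBilinearMap_apply.continuous.comp_aestronglyMeasurable
      (((hP.mono uIoc_subset_uIcc).aestronglyMeasurable measurableSet_uIoc).prodMk
        hw.def'.aestronglyMeasurable)
  · refine (ae_restrict_iff' measurableSet_uIoc).2 (ae_of_all _ fun u hu => ?_)
    exact ((P u).le_opNorm _).trans
      (mul_le_mul_of_nonneg_right (hB u (uIoc_subset_uIcc hu)) (norm_nonneg _))

theorem lipschitzOnWith_of_eq_integral {y g : ℝ → E} {c m K : ℝ}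
    (hg : IntervalIntegrable g volume c m) (hgK : ∀ u ∈ uIcc c m, ‖g u‖ ≤ K)
    (hy : ∀ u ∈ uIcc c m, y u = y c + ∫ τ in c..u, g τ) :
    LipschitzOnWith K.toNNReal y (uIcc c m) :=
  LipschitzOnWith.of_dist_le_mul fun u hu u' hu' => by
    rw [hy u hu, hy u' hu', dist_add_left]
    exact (lipschitzOnWith_intervalIntegral hg hgK).dist_le_mul u hu u' hu'

variable [CompleteSpace E]

theorem ae_hasDerivAt_of_eq_integral {y g : ℝ → E} {c m : ℝ}
    (hg : IntervalIntegrable g volume c m)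
    (hy : ∀ u ∈ uIcc c m, y u = y c + ∫ τ in c..u, g τ) :
    ∀ᵐ u, u ∈ uIcc c m → HasDerivAt y (g u) u := by
  have hne : ∀ a : ℝ, ∀ᵐ u : ℝ, u ≠ a := fun a => by simp [ae_iff]
  filter_upwards [hg.ae_hasDerivAt_integral, hne (c ⊓ m), hne (c ⊔ m)] with u hgu hu₁ hu₂ hu
  have hnhds : uIcc c m ∈ nhds u := Icc_mem_nhds (hu.1.lt_of_ne' hu₁) (hu.2.lt_of_ne hu₂)
  exact ((hgu hu c left_mem_uIcc).const_add (y c)).congr_of_eventuallyEq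
    (Filter.mem_of_superset hnhds hy)

theorem eq_exp_smul_apply_add_integral (T : E →L[ℝ] E) {y g : ℝ → E} {c m K : ℝ}
    (hg : IntervalIntegrable g volume c m) (hgK : ∀ u ∈ uIcc c m, ‖g u‖ ≤ K)
    (hy : ∀ u ∈ uIcc c m, y u = y c + ∫ τ in c..u, g τ) :
    y m = NormedSpace.exp ((m - c) • T) (y c) +
      ∫ u in c..m, NormedSpace.exp ((m - u) • T) (g u - T (y u)) := by
  set P : ℝ → E →L[ℝ] E := fun u => NormedSpace.exp ((m - u) • T)
  have hPderiv : ∀ u, HasDerivAt P (-(P u * T)) u := fun u => by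
    simpa [Function.comp_def, P] using
      (hasDerivAt_exp_smul_const T (m - u)).scomp u ((hasDerivAt_id u).const_sub m)
  have hPsmooth : ContDiff ℝ 1 P := (contDiff_iff_contDiffAt.2 fun a =>
    (NormedSpace.exp_analytic (𝕂 := ℝ) a).contDiffAt).comp (by fun_prop)
  obtain ⟨KP, hPL⟩ := hPsmooth.contDiffOn.exists_lipschitzOnWith one_ne_zero (convex_uIcc c m)
    isCompact_uIcc
  have hyL := lipschitzOnWith_of_eq_integral hg hgK hy
  obtain ⟨BP, hBP⟩ := isCompact_uIcc.exists_bound_of_continuousOn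
    (hPsmooth.continuous.continuousOn (s := uIcc c m))
  obtain ⟨By, hBy⟩ := isCompact_uIcc.exists_bound_of_continuousOn hyL.continuousOn
  set h : ℝ → E := fun u => P u (g u - T (y u))
  have hhint : IntervalIntegrable h volume c m :=
    IntervalIntegrable.continuousOn_clm_apply
      (hg.sub (T.continuous.comp_continuousOn hyL.continuousOn).intervalIntegrable)
      hPsmooth.continuous.continuousOn
  have hhK : ∀ u ∈ uIcc c m, ‖h u‖ ≤ BP * (K + ‖T‖ * By) := fun u hu => by
    refine ((P u).le_opNorm _).trans (mul_le_mul (hBP u hu) ?_ (norm_nonneg _)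
      ((norm_nonneg _).trans (hBP u hu)))
    exact (norm_sub_le _ _).trans (add_le_add (hgK u hu)
      ((T.le_opNorm _).trans (by gcongr; exact hBy u hu)))
  set φ : ℝ → E := fun u => P u (y u) - ∫ τ in c..u, h τ
  obtain ⟨KPy, hPyL⟩ := exists_lipschitzOnWith_clm_apply isCompact_uIcc hPL hyL
  have hφac : AbsolutelyContinuousOnInterval φ c m :=
    hPyL.absolutelyContinuousOnInterval.sub
      (lipschitzOnWith_intervalIntegral hhint hhK).absolutelyContinuousOnInterval
  have hφderiv : ∀ᵐ u, u ∈ uIcc c m → HasDerivAt φ 0 u := by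
    filter_upwards [ae_hasDerivAt_of_eq_integral hg hy, hhint.ae_hasDerivAt_integral]
      with u hyu hhu hu
    refine (((hPderiv u).clm_apply (hyu hu)).sub (hhu hu c left_mem_uIcc)).congr_deriv ?_
    simp only [neg_apply, mul_apply_eq_comp, map_sub, h]
    abel
  obtain ⟨C, hC⟩ := hφac.const_of_ae_hasDerivAt_zero hφderiv
  have hφcm : φ m = φ c := (hC m right_mem_uIcc).trans (hC c left_mem_uIcc).symm
  simp only [φ, P, sub_self, zero_smul, NormedSpace.exp_zero, intervalIntegral.integral_same,
    sub_zero] at hφcm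
  rw [← hφcm]
  simp [h, P]

theorem norm_sub_le_of_eq_integral (T : E →L[ℝ] E) {y g : ℝ → E} {c m K Θ lam σ M : ℝ}
    (hcm : c ≤ m) (hg : IntervalIntegrable g volume c m) (hgK : ∀ u ∈ Icc c m, ‖g u‖ ≤ K)
    (hy : ∀ u ∈ Icc c m, y u = y c + ∫ τ in c..u, g τ)
    (hdecay : ∀ τ, 0 ≤ τ → ‖NormedSpace.exp (τ • T)‖ ≤ Θ * Real.exp (-lam * τ))
    (hσ : σ < lam) (hf : ∀ u ∈ Icc c m, ‖g u - T (y u)‖ ≤ M * Real.exp (-σ * u)) :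
    ‖y m - y c‖ ≤ (Real.exp (‖T‖ * (m - c)) - 1) * ‖y c‖ +
      Θ * M * Real.exp (-σ * m) * ((1 - Real.exp (-(lam - σ) * (m - c))) / (lam - σ)) := by
  rw [← uIcc_of_le hcm] at hgK hy
  rw [eq_exp_smul_apply_add_integral T hg hgK hy, add_sub_right_comm]
  refine (norm_add_le _ _).trans (add_le_add ?_ ?_)
  · calc ‖NormedSpace.exp ((m - c) • T) (y c) - y c‖
        = ‖(NormedSpace.exp ((m - c) • T) - 1) (y c)‖ := rfl
      _ ≤ ‖NormedSpace.exp ((m - c) • T) - 1‖ * ‖y c‖ := ContinuousLinearMap.le_opNorm _ _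
      _ ≤ (Real.exp (‖T‖ * (m - c)) - 1) * ‖y c‖ := by
        gcongr
        refine (norm_exp_sub_one_le _).trans ?_
        rw [norm_smul, Real.norm_of_nonneg (sub_nonneg.2 hcm), mul_comm]
  · have hbound : ∀ u ∈ Ioc c m, ‖NormedSpace.exp ((m - u) • T) (g u - T (y u))‖ ≤
        Θ * M * Real.exp (-σ * m) * Real.exp (-(lam - σ) * (m - u)) := by
      intro u hu
      have hdecay_u := hdecay (m - u) (sub_nonneg.2 hu.2)
      calc _ ≤ ‖NormedSpace.exp ((m - u) • T)‖ * ‖g u - T (y u)‖ :=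
            ContinuousLinearMap.le_opNorm _ _
        _ ≤ Θ * Real.exp (-lam * (m - u)) * (M * Real.exp (-σ * u)) :=
            mul_le_mul hdecay_u (hf u (Ioc_subset_Icc_self hu)) (norm_nonneg _)
              ((norm_nonneg _).trans hdecay_u)
        _ = _ := by
            rw [mul_mul_mul_comm, ← Real.exp_add, mul_assoc (Θ * M), ← Real.exp_add]; ring_nf
    refine (intervalIntegral.norm_integral_le_of_norm_le hcm (ae_of_all _ hbound)
      (Continuous.intervalIntegrable (by fun_prop) _ _)).trans_eq ?_
    rw [intervalIntegral.integral_const_mul, integral_exp_neg_mul_sub (by linarith)]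

end VariationOfConstants

section DelayEquation

variable {E : Type*} [NormedAddCommGroup E] [NormedSpace ℝ E]

def delayField (T S : E →L[ℝ] E) (r ε : ℝ) (d q : ℝ → ℝ) (x : ℝ → E) (u : ℝ) : E :=
  T (x u) + q u • S (x (u - r - ε * d u) - x (u - r))

/-- Solutions of `x'(t) = T x(t) + q(t) S (x(t - r - ε d(t)) - x(t - r))` for `t ≥ 0`, in
integrated form, with a continuous history on `[-(r + ε), 0]`. -/
structure IsDelaySolution (T S : E →L[ℝ] E) (r ε : ℝ) (d q : ℝ → ℝ) (x : ℝ → E) : Prop where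
  measurable_d : Measurable d
  mem_Icc_d : ∀ t, 0 ≤ t → d t ∈ Icc (-1 : ℝ) 1
  measurable_q : Measurable q
  mem_Icc_q : ∀ t, 0 ≤ t → q t ∈ Icc (-1 : ℝ) 1
  continuousOn : ContinuousOn x (Ici (-(r + ε)))
  eq_integral : ∀ t, 0 ≤ t → x t = x 0 + ∫ s in 0..t, delayField T S r ε d q x s

namespace IsDelaySolution

variable {T S : E →L[ℝ] E} {r ε : ℝ} {d q : ℝ → ℝ} {x : ℝ → E}

theorem delay_mem_Icc (h : IsDelaySolution T S r ε d q x) (hε : 0 ≤ ε) {u : ℝ} (hu : 0 ≤ u) :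
    u - r - ε * d u ∈ Icc (u - r - ε) (u - r + ε) := by
  obtain ⟨hd₁, hd₂⟩ := h.mem_Icc_d u hu
  constructor <;> nlinarith

theorem exists_norm_le (h : IsDelaySolution T S r ε d q x) (t : ℝ) :
    ∃ B, ∀ u ∈ Icc (-(r + ε)) t, ‖x u‖ ≤ B :=
  isCompact_Icc.exists_bound_of_continuousOn (h.continuousOn.mono Icc_subset_Ici_self)

theorem exists_norm_delayField_le (h : IsDelaySolution T S r ε d q x) (hr : 0 ≤ r) (hε : 0 ≤ ε)
    (t : ℝ) : ∃ K, ∀ u ∈ Icc 0 t, ‖delayField T S r ε d q x u‖ ≤ K := by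
  obtain ⟨B, hB⟩ := h.exists_norm_le (t + ε)
  refine ⟨‖T‖ * B + ‖S‖ * (B + B), fun u hu => ?_⟩
  have hdel := h.delay_mem_Icc hε hu.1
  have hq := abs_le.2 (h.mem_Icc_q u hu.1)
  have hxB : ∀ w, -(r + ε) ≤ w → w ≤ t + ε → ‖x w‖ ≤ B := fun w hw₁ hw₂ => hB w ⟨hw₁, hw₂⟩
  refine (norm_add_le _ _).trans (add_le_add ((T.le_opNorm _).trans ?_) ?_)
  · gcongr; exact hxB u (by linarith [hu.1]) (by linarith [hu.2])
  rw [norm_smul, Real.norm_eq_abs]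
  refine (mul_le_of_le_one_left (norm_nonneg _) hq).trans ((S.le_opNorm _).trans ?_)
  gcongr
  exact (norm_sub_le _ _).trans (add_le_add
    (hxB _ (by linarith [hdel.1, hu.1]) (by linarith [hdel.2, hu.2]))
    (hxB _ (by linarith [hu.1]) (by linarith [hu.2])))

theorem intervalIntegrable_delayField (h : IsDelaySolution T S r ε d q x) (hr : 0 ≤ r)
    (hε : 0 ≤ ε) {t : ℝ} (ht : 0 ≤ t) :
    IntervalIntegrable (delayField T S r ε d q x) volume 0 t := by
  obtain ⟨K, hK⟩ := h.exists_norm_delayField_le hr hε t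
  -- a continuous extension of `x` that agrees with it at every argument used for `u ≥ 0`
  set x' : ℝ → E := fun u => x (max u (-(r + ε)))
  have hx' : Continuous x' :=
    h.continuousOn.comp_continuous (by fun_prop) fun u => mem_Ici.2 (le_max_right _ _)
  have hmeas : StronglyMeasurable (delayField T S r ε d q x') := by
    have hdelay : Measurable fun u => u - r - ε * d u := by
      have := h.measurable_d
      fun_prop
    refine (T.continuous.comp hx').stronglyMeasurable.add
      (h.measurable_q.stronglyMeasurable.smul ?_)
    exact (S.continuous.comp_stronglyMeasurable
      ((hx'.comp_stronglyMeasurable hdelay.stronglyMeasurable).sub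
        (hx'.comp (continuous_sub_right r)).stronglyMeasurable))
  have hIoc : ∀ᵐ u ∂volume.restrict (uIoc 0 t), u ∈ Icc 0 t := by
    rw [uIoc_of_le ht]
    exact (ae_restrict_iff' measurableSet_Ioc).2 (ae_of_all _ fun u hu => Ioc_subset_Icc_self hu)
  refine (intervalIntegrable_const (c := K)).mono_fun' ?_ ?_
  · refine hmeas.aestronglyMeasurable.congr (hIoc.mono fun u hu => ?_)
    have hdel := h.delay_mem_Icc hε hu.1
    simp only [delayField, x']
    rw [max_eq_left, max_eq_left, max_eq_left] <;> linarith [hu.1, hdel.1]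
  · exact hIoc.mono hK

variable [CompleteSpace E]

theorem norm_increment_le (h : IsDelaySolution T S r ε d q x) (hr : 0 ≤ r) (hε : 0 ≤ ε)
    {v : ℝ → E} (hv : ∀ u, 0 ≤ u → v u = x (u - r) - x (u - r - ε * d u)) {Θ lam σ : ℝ}
    (hdecay : ∀ τ, 0 ≤ τ → ‖NormedSpace.exp (τ • T)‖ ≤ Θ * Real.exp (-lam * τ))
    (hσ : σ < lam) {c m V : ℝ} (hc : 0 ≤ c) (hcm : c ≤ m)
    (hV : ∀ u ∈ Icc c m, Real.exp (σ * u) * ‖v u‖ ≤ V) :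
    ‖x m - x c‖ ≤ (Real.exp (‖T‖ * (m - c)) - 1) * ‖x c‖ +
      Θ * (‖S‖ * V) * Real.exp (-σ * m) * ((1 - Real.exp (-(lam - σ) * (m - c))) / (lam - σ)) := by
  have hint : ∀ a ∈ Icc 0 m, ∀ b ∈ Icc 0 m,
      IntervalIntegrable (delayField T S r ε d q x) volume a b := fun a ha b hb =>
    (h.intervalIntegrable_delayField hr hε (hc.trans hcm)).mono_set
      (uIcc_subset_uIcc (mem_uIcc_of_le ha.1 ha.2) (mem_uIcc_of_le hb.1 hb.2))
  have hcI : c ∈ Icc 0 m := ⟨hc, hcm⟩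
  obtain ⟨K, hK⟩ := h.exists_norm_delayField_le hr hε m
  refine norm_sub_le_of_eq_integral T hcm (hint c hcI m ⟨hc.trans hcm, le_rfl⟩)
    (fun u hu => hK u ⟨hc.trans hu.1, hu.2⟩) (fun u hu => ?_) hdecay hσ (fun u hu => ?_)
  · have huI : u ∈ Icc 0 m := ⟨hc.trans hu.1, hu.2⟩
    rw [h.eq_integral u huI.1, h.eq_integral c hc, add_assoc,
      intervalIntegral.integral_add_adjacent_intervals (hint 0 ⟨le_rfl, huI.1.trans huI.2⟩ c hcI)
        (hint c hcI u huI)]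
  · have hu0 : 0 ≤ u := hc.trans hu.1
    have hvu : ‖v u‖ ≤ V * Real.exp (-σ * u) := by
      rw [neg_mul, Real.exp_neg, le_mul_inv_iff₀ (Real.exp_pos _), mul_comm]
      exact hV u hu
    calc ‖delayField T S r ε d q x u - T (x u)‖ = ‖q u • S (v u)‖ := by
          rw [hv u hu0, delayField, add_sub_cancel_left, ← norm_neg, ← smul_neg, ← map_neg,
            neg_sub]
      _ ≤ ‖S‖ * ‖v u‖ := by
          rw [norm_smul]
          exact mul_le_of_le_one_left (norm_nonneg _) (abs_le.2 (h.mem_Icc_q u hu0))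
            |>.trans (S.le_opNorm _)
      _ ≤ ‖S‖ * V * Real.exp (-σ * u) := by
          rw [mul_assoc]; gcongr

theorem exp_mul_norm_sub_le (h : IsDelaySolution T S r ε d q x) (hr : 0 ≤ r) (hε : 0 ≤ ε)
    {v : ℝ → E} (hv : ∀ u, 0 ≤ u → v u = x (u - r) - x (u - r - ε * d u)) {Θ lam σ : ℝ}
    (hΘ : 0 ≤ Θ) (hdecay : ∀ τ, 0 ≤ τ → ‖NormedSpace.exp (τ • T)‖ ≤ Θ * Real.exp (-lam * τ))
    (hσ : σ ∈ Ioo 0 lam) {s c m X V : ℝ} (hc : 0 ≤ c) (hcm : c ≤ m) (hmc : m - c ≤ ε)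
    (hsc : s - c ≤ r + ε) (hsm : s - m ≤ r + ε) (hX : Real.exp (σ * c) * ‖x c‖ ≤ X)
    (hV : ∀ u ∈ Icc c m, Real.exp (σ * u) * ‖v u‖ ≤ V) :
    Real.exp (σ * s) * ‖x m - x c‖ ≤
      Real.exp (σ * (r + ε)) * (Real.exp (‖T‖ * ε) - 1) * X +
        Θ * Real.exp (σ * (r + ε)) * ((1 - Real.exp (-(lam - σ) * ε)) / (lam - σ)) * ‖S‖ * V := by
  have hV0 : 0 ≤ V := (by positivity : 0 ≤ Real.exp (σ * c) * ‖v c‖).trans (hV c ⟨le_rfl, hcm⟩)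
  have hlam : 0 < lam - σ := sub_pos.2 hσ.2
  have hfirst : Real.exp (σ * s) * ((Real.exp (‖T‖ * (m - c)) - 1) * ‖x c‖) ≤
      Real.exp (σ * (r + ε)) * (Real.exp (‖T‖ * ε) - 1) * X := by
    calc _ = Real.exp (σ * (s - c)) * (Real.exp (‖T‖ * (m - c)) - 1) *
          (Real.exp (σ * c) * ‖x c‖) := by
          rw [show σ * s = σ * (s - c) + σ * c by ring, Real.exp_add]; ring
      _ ≤ _ := by
          gcongr
          · exact mul_nonneg (Real.exp_pos _).le (sub_nonneg.2 (Real.one_le_exp (by positivity)))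
          · exact sub_nonneg.2 (Real.one_le_exp (by nlinarith [norm_nonneg T]))
          · exact hσ.1.le
  have hsecond : Real.exp (σ * s) * (Θ * (‖S‖ * V) * Real.exp (-σ * m) *
      ((1 - Real.exp (-(lam - σ) * (m - c))) / (lam - σ))) ≤
      Θ * Real.exp (σ * (r + ε)) * ((1 - Real.exp (-(lam - σ) * ε)) / (lam - σ)) * ‖S‖ * V := by
    calc _ = Θ * Real.exp (σ * (s - m)) * ((1 - Real.exp (-(lam - σ) * (m - c))) / (lam - σ)) *
          ‖S‖ * V := by
          rw [show σ * (s - m) = σ * s + -σ * m by ring, Real.exp_add]; ring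
      _ ≤ _ := by
          gcongr Θ * Real.exp ?_ * ?_ * ‖S‖ * V
          · exact div_nonneg (sub_nonneg.2 (Real.exp_le_one_iff.2 (by nlinarith))) hlam.le
          · exact mul_le_mul_of_nonneg_left hsm hσ.1.le
          · exact div_le_div_of_nonneg_right
              (sub_le_sub_left (Real.exp_le_exp.2 (by nlinarith)) 1) hlam.le
  refine (mul_le_mul_of_nonneg_left (h.norm_increment_le hr hε hv hdecay hσ.2 hc hcm hV)
    (Real.exp_pos _).le).trans ?_
  rw [mul_add]
  exact add_le_add hfirst hsecond

theorem exp_mul_norm_le (h : IsDelaySolution T S r ε d q x) (hr : 0 ≤ r) (hε : 0 ≤ ε)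
    {v : ℝ → E} (hv : ∀ u, 0 ≤ u → v u = x (u - r) - x (u - r - ε * d u)) {Θ lam σ : ℝ}
    (hΘ : 0 ≤ Θ) (hdecay : ∀ τ, 0 ≤ τ → ‖NormedSpace.exp (τ • T)‖ ≤ Θ * Real.exp (-lam * τ))
    (hσ : σ ∈ Ioo 0 lam) {s X V : ℝ} (hs : r + ε ≤ s)
    (hX : ∀ u ∈ Icc 0 (s - r), Real.exp (σ * u) * ‖x u‖ ≤ X)
    (hV : ∀ u ∈ Icc 0 (s - r + ε), Real.exp (σ * u) * ‖v u‖ ≤ V) :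
    Real.exp (σ * s) * ‖v s‖ ≤
      Real.exp (σ * (r + ε)) * (Real.exp (‖T‖ * ε) - 1) * X +
        Θ * Real.exp (σ * (r + ε)) * ((1 - Real.exp (-(lam - σ) * ε)) / (lam - σ)) * ‖S‖ * V := by
  have hs0 : 0 ≤ s := by linarith
  have hdel := h.delay_mem_Icc hε hs0
  set a := s - r - ε * d s
  have hvs : ‖v s‖ = ‖x (max a (s - r)) - x (min a (s - r))‖ := by
    rw [hv s hs0]
    rcases le_total a (s - r) with hab | hab
    · rw [max_eq_right hab, min_eq_left hab]
    · rw [max_eq_left hab, min_eq_right hab, norm_sub_rev]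
  have hc : s - r - ε ≤ min a (s - r) := le_min hdel.1 (by linarith)
  have hm : s - r ≤ max a (s - r) := le_max_right _ _
  have hmV : max a (s - r) ≤ s - r + ε := max_le hdel.2 (by linarith)
  have hmc : max a (s - r) - min a (s - r) ≤ ε := by
    rw [max_sub_min_eq_abs, show s - r - a = ε * d s by ring, abs_mul, abs_of_nonneg hε]
    exact mul_le_of_le_one_right hε (abs_le.2 (h.mem_Icc_d s hs0))
  have hc0 : 0 ≤ min a (s - r) := by linarith
  rw [hvs]
  exact h.exp_mul_norm_sub_le hr hε hv hΘ hdecay hσ hc0 min_le_max hmc (by linarith)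
    (by linarith) (hX _ ⟨hc0, min_le_right _ _⟩) fun u hu => hV u ⟨hc0.trans hu.1, hu.2.trans hmV⟩

end IsDelaySolution

end DelayEquation

open scoped Matrix.Norms.L2Operator in
theorem toEuclideanCLM_mexp {n : ℕ} (A : Matrix (Fin n) (Fin n) ℝ) (t : ℝ) :
    Matrix.toEuclideanCLM (𝕜 := ℝ) (mexp A t) =
      NormedSpace.exp (t • Matrix.toEuclideanCLM (𝕜 := ℝ) A) := by
  let := NormedAlgebra.restrictScalars ℚ ℝ (Matrix (Fin n) (Fin n) ℝ)
  have h := NormedSpace.map_exp (Matrix.toEuclideanCLM (n := Fin n) (𝕜 := ℝ))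
    (AddMonoidHomClass.continuous_of_bound _ 1 fun M => by rw [one_mul, Matrix.cstar_norm_def])
    (t • A)
  rwa [map_smul] at h

theorem stmt_14_general (n : ℕ) (A C : Matrix (Fin n) (Fin n) ℝ)
    (r ε Θ lam σ : ℝ) (hε : 0 ≤ ε) (hεr : ε ≤ r) (hΘ : 0 < Θ)
    (hdecay : ∀ t : ℝ, 0 ≤ t → opNorm (mexp A t) ≤ Θ * Real.exp (-lam * t))
    (hσ : σ ∈ Set.Ioo 0 lam)
    (d q : ℝ → ℝ) (hd : Measurable d) (hd1 : ∀ t, 0 ≤ t → d t ∈ Set.Icc (-1 : ℝ) 1)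
    (hq : Measurable q) (hq1 : ∀ t, 0 ≤ t → q t ∈ Set.Icc (-1 : ℝ) 1)
    (x : ℝ → EuclideanSpace ℝ (Fin n))
    (hxc : ContinuousOn x (Set.Ici (-(r + ε))))
    (hxode : ∀ t : ℝ, 0 ≤ t →
      x t = x 0 + ∫ s in (0 : ℝ)..t,
        (mv A (x s) + q s • mv C (x (s - r - ε * d s) - x (s - r))))
    (v : ℝ → EuclideanSpace ℝ (Fin n))
    (hv : ∀ t : ℝ, 0 ≤ t → v t = x (t - r) - x (t - r - ε * d t)) :
    ∀ t : ℝ, r + ε ≤ t →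
      sSup ((fun s => Real.exp (σ * s) * ‖v s‖) '' Set.Icc (r + ε) t) ≤
        Real.exp (σ * (r + ε)) * (Real.exp (opNorm A * ε) - 1) *
          sSup ((fun s => Real.exp (σ * s) * ‖x s‖) '' Set.Icc 0 (t - r)) +
        Θ * Real.exp (σ * (r + ε)) *
          ((1 - Real.exp (-(lam - σ) * ε)) / (lam - σ)) * opNorm C *
          sSup ((fun s => Real.exp (σ * s) * ‖v s‖) '' Set.Icc 0 (t - r + ε)) := by
  intro t ht
  have hr : 0 ≤ r := hε.trans hεr
  have hsol : IsDelaySolution (Matrix.toEuclideanCLM (𝕜 := ℝ) A)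
      (Matrix.toEuclideanCLM (𝕜 := ℝ) C) r ε d q x := ⟨hd, hd1, hq, hq1, hxc, hxode⟩
  have hdecay' : ∀ τ : ℝ, 0 ≤ τ →
      ‖NormedSpace.exp (τ • Matrix.toEuclideanCLM (𝕜 := ℝ) A)‖ ≤ Θ * Real.exp (-lam * τ) :=
    fun τ hτ => toEuclideanCLM_mexp A τ ▸ hdecay τ hτ
  obtain ⟨B, hB⟩ := hsol.exists_norm_le t
  have hxB : ∀ u ∈ Icc 0 (t - r), ‖x u‖ ≤ B := fun u hu =>
    hB u ⟨by linarith [hu.1], by linarith [hu.2]⟩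
  have hvB : ∀ u ∈ Icc 0 (t - r + ε), ‖v u‖ ≤ B + B := fun u hu => by
    have hdel := hsol.delay_mem_Icc hε hu.1
    rw [hv u hu.1]
    exact (norm_sub_le _ _).trans (add_le_add (hB _ ⟨by linarith [hu.1], by linarith [hu.2]⟩)
      (hB _ ⟨by linarith [hdel.1, hu.1], by linarith [hdel.2, hu.2]⟩))
  have hX := bddAbove_exp_mul_norm_image σ hxB
  have hV := bddAbove_exp_mul_norm_image σ hvB
  refine csSup_le ((nonempty_Icc.2 ht).image _) ?_
  rintro _ ⟨s, hs, rfl⟩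
  exact hsol.exp_mul_norm_le hr hε hv hΘ.le hdecay' hσ hs.1
    (fun u hu => le_csSup hX ⟨u, ⟨hu.1, hu.2.trans (by linarith [hs.2])⟩, rfl⟩)
    (fun u hu => le_csSup hV ⟨u, ⟨hu.1, hu.2.trans (by linarith [hs.2])⟩, rfl⟩)

theorem stmt_14 (n : ℕ) (A C : Matrix (Fin n) (Fin n) ℝ)
    (r ε Θ lam σ : ℝ) (hε : 0 ≤ ε) (hεr : ε ≤ r) (hΘ : 0 < Θ) (hlam : 0 < lam)
    (hdecay : ∀ t : ℝ, 0 ≤ t → opNorm (mexp A t) ≤ Θ * Real.exp (-lam * t))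
    (hσ : σ ∈ Set.Ioo 0 lam)
    (d q : ℝ → ℝ) (hd : Measurable d) (hd1 : ∀ t, 0 ≤ t → d t ∈ Set.Icc (-1 : ℝ) 1)
    (hq : Measurable q) (hq1 : ∀ t, 0 ≤ t → q t ∈ Set.Icc (-1 : ℝ) 1)
    (x : ℝ → EuclideanSpace ℝ (Fin n))
    (hxc : ContinuousOn x (Set.Ici (-(r + ε))))
    (hxode : ∀ t : ℝ, 0 ≤ t →
      x t = x 0 + ∫ s in (0 : ℝ)..t,
        (mv A (x s) + q s • mv C (x (s - r - ε * d s) - x (s - r))))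
    (v : ℝ → EuclideanSpace ℝ (Fin n))
    (hv : ∀ t : ℝ, 0 ≤ t → v t = x (t - r) - x (t - r - ε * d t)) :
    ∀ t : ℝ, r + ε ≤ t →
      sSup ((fun s => Real.exp (σ * s) * ‖v s‖) '' Set.Icc (r + ε) t) ≤
        Real.exp (σ * (r + ε)) * (Real.exp (opNorm A * ε) - 1) *
          sSup ((fun s => Real.exp (σ * s) * ‖x s‖) '' Set.Icc 0 (t - r)) +
        Θ * Real.exp (σ * (r + ε)) *
          ((1 - Real.exp (-(lam - σ) * ε)) / (lam - σ)) * opNorm C *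
          sSup ((fun s => Real.exp (σ * s) * ‖v s‖) '' Set.Icc 0 (t - r + ε)) :=
  stmt_14_general n A C r ε Θ lam σ hε hεr hΘ hdecay hσ d q hd hd1 hq hq1 x hxc hxode v hv
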